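/- Let σ: ℝ² → E be a classical symbol of real order α, i.e. σ(ξ) = Σ_{j=0}^N χ(ξ)σ_{α-j}(ξ) + σ^N(ξ) where each σ_{α-j} is continuous and positively homogeneous of degree α-j, χ is a cutoff vanishing near 0 and equal to 1 outside B(1), and σ^N is integrable (N > α+1). Then ∫_{B(R)} σ(ξ)dξ admits, as R → ∞, an asymptotic expansion of the form Σ_{j: α-j+2≠0} a_j R^{α-j+2} + β log R + c + o(1), where β = ∫_{|ξ|=1} σ_{-2}(ω)dω (interpreted as 0 if -2 does not occur among the orders α-j with j ≤ N). -/

import Mathlib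

open Real MeasureTheory Filter Finset

section Aux

variable {E : Type*} [NormedAddCommGroup E] [NormedSpace ℝ E]

lemma symAsym_nrm_cont : Continuous fun p : ℝ × ℝ => Real.sqrt (p.1 ^ 2 + p.2 ^ 2) :=
  ((continuous_fst.pow 2).add (continuous_snd.pow 2)).sqrt

lemma symAsym_nrm_smul (c : ℝ) (hc : 0 ≤ c) (p : ℝ × ℝ) :
    Real.sqrt ((c • p).1 ^ 2 + (c • p).2 ^ 2) = c * Real.sqrt (p.1 ^ 2 + p.2 ^ 2) := by
  have h1 : (c • p).1 = c * p.1 := rfl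
  have h2 : (c • p).2 = c * p.2 := rfl
  rw [h1, h2, show (c * p.1) ^ 2 + (c * p.2) ^ 2 = c ^ 2 * (p.1 ^ 2 + p.2 ^ 2) by ring,
    Real.sqrt_mul (sq_nonneg c), Real.sqrt_sq hc]

lemma symAsym_circ_nrm (θ : ℝ) :
    Real.sqrt ((Real.cos θ) ^ 2 + (Real.sin θ) ^ 2) = 1 := by
  rw [Real.cos_sq_add_sin_sq, Real.sqrt_one]

lemma symAsym_circ_ne (θ : ℝ) : ((Real.cos θ, Real.sin θ) : ℝ × ℝ) ≠ 0 := by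
  intro h
  have h1 : Real.cos θ = 0 := congrArg Prod.fst h
  have h2 : Real.sin θ = 0 := congrArg Prod.snd h
  have := Real.cos_sq_add_sin_sq θ
  rw [h1, h2] at this; norm_num at this

lemma symAsym_measurable_ann (R : ℝ) :
    MeasurableSet {p : ℝ × ℝ | 1 < Real.sqrt (p.1 ^ 2 + p.2 ^ 2)
      ∧ Real.sqrt (p.1 ^ 2 + p.2 ^ 2) ≤ R} := by
  rw [Set.setOf_and]
  exact (measurableSet_lt measurable_const symAsym_nrm_cont.measurable).inter
    (measurableSet_le symAsym_nrm_cont.measurable measurable_const)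

/-- Polar-coordinates computation of the integral of a homogeneous function over an annulus. -/
lemma symAsym_annulus_polar [CompleteSpace E] (g : ℝ × ℝ → E) (d : ℝ)
    (hgh : ∀ c : ℝ, 0 < c → ∀ p : ℝ × ℝ, p ≠ 0 → g (c • p) = c ^ d • g p) (R : ℝ) :
    ∫ p in {p : ℝ × ℝ | 1 < Real.sqrt (p.1 ^ 2 + p.2 ^ 2)
        ∧ Real.sqrt (p.1 ^ 2 + p.2 ^ 2) ≤ R}, g p
      = (∫ r in Set.Ioc (1:ℝ) R, r ^ (d + 1)) •
          ∫ θ in (0:ℝ)..(2 * π), g (Real.cos θ, Real.sin θ) := by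
  set A : Set (ℝ × ℝ) := {p : ℝ × ℝ | 1 < Real.sqrt (p.1 ^ 2 + p.2 ^ 2)
      ∧ Real.sqrt (p.1 ^ 2 + p.2 ^ 2) ≤ R} with hAdef
  have hA : MeasurableSet A := symAsym_measurable_ann R
  have hper : Function.Periodic (fun θ => g (Real.cos θ, Real.sin θ)) (2 * π) := by
    intro θ; simp only [Real.cos_add_two_pi, Real.sin_add_two_pi]
  have hcirc : ∫ θ in Set.Ioo (-π) π, g (Real.cos θ, Real.sin θ)
      = ∫ θ in (0:ℝ)..(2 * π), g (Real.cos θ, Real.sin θ) := by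
    rw [← MeasureTheory.integral_Ioc_eq_integral_Ioo,
      ← intervalIntegral.integral_of_le (by linarith [Real.pi_pos] : -π ≤ π)]
    have h := hper.intervalIntegral_add_eq (-π) 0
    rw [show -π + 2 * π = π by ring, zero_add] at h
    exact h
  calc ∫ p in A, g p = ∫ p, A.indicator g p := (integral_indicator hA).symm
    _ = ∫ p in polarCoord.target, p.1 • A.indicator g (polarCoord.symm p) :=
        (integral_comp_polarCoord_symm _).symm
    _ = ∫ p in Set.Ioi (0:ℝ) ×ˢ Set.Ioo (-π) π,
          (Set.Ioc (1:ℝ) R).indicator (fun r => r ^ (d + 1)) p.1 •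
            g (Real.cos p.2, Real.sin p.2) := by
        apply setIntegral_congr_fun (polarCoord.open_target.measurableSet)
        rintro ⟨r, θ⟩ ⟨hr, hθ⟩
        have hr0 : (0:ℝ) < r := hr
        have hsymm : polarCoord.symm (r, θ) = r • ((Real.cos θ, Real.sin θ) : ℝ × ℝ) := by
          simp [polarCoord, Prod.smul_mk, smul_eq_mul]
        have hnrm : Real.sqrt ((polarCoord.symm (r, θ)).1 ^ 2 + (polarCoord.symm (r, θ)).2 ^ 2)
            = r := by
          rw [hsymm, symAsym_nrm_smul r hr0.le, symAsym_circ_nrm, mul_one]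
        show r • A.indicator g (polarCoord.symm (r, θ))
          = (Set.Ioc (1:ℝ) R).indicator (fun r => r ^ (d + 1)) r • g (Real.cos θ, Real.sin θ)
        by_cases hmem : r ∈ Set.Ioc (1:ℝ) R
        · have hmemA : polarCoord.symm (r, θ) ∈ A := by
            rw [hAdef]; constructor <;> rw [hnrm]
            exacts [hmem.1, hmem.2]
          rw [Set.indicator_of_mem hmemA, Set.indicator_of_mem hmem]
          show r • g (polarCoord.symm (r, θ)) = r ^ (d + 1) • g (Real.cos θ, Real.sin θ)
          rw [hsymm, hgh r hr0 _ (symAsym_circ_ne θ), smul_smul,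
            Real.rpow_add_one (ne_of_gt hr0) d]
          ring_nf
        · have hmemA : polarCoord.symm (r, θ) ∉ A := by
            rw [hAdef]
            intro hc
            exact hmem ⟨by rw [← hnrm]; exact hc.1, by rw [← hnrm]; exact hc.2⟩
          rw [Set.indicator_of_notMem hmemA, Set.indicator_of_notMem hmem,
            smul_zero, zero_smul]
    _ = ∫ p : ℝ × ℝ, ((Set.Ioc (1:ℝ) R).indicator (fun r => r ^ (d + 1)) p.1 •
            g (Real.cos p.2, Real.sin p.2))
          ∂((volume.restrict (Set.Ioi (0:ℝ))).prod (volume.restrict (Set.Ioo (-π) π))) := by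
        rw [Measure.volume_eq_prod ℝ ℝ, Measure.prod_restrict]
    _ = (∫ r in Set.Ioi (0:ℝ), (Set.Ioc (1:ℝ) R).indicator (fun r => r ^ (d + 1)) r) •
          ∫ θ in Set.Ioo (-π) π, g (Real.cos θ, Real.sin θ) :=
        integral_prod_smul ((Set.Ioc (1:ℝ) R).indicator fun r => r ^ (d + 1))
          (fun θ => g (Real.cos θ, Real.sin θ))
    _ = (∫ r in Set.Ioc (1:ℝ) R, r ^ (d + 1)) •
          ∫ θ in (0:ℝ)..(2 * π), g (Real.cos θ, Real.sin θ) := by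
        have hinter : Set.Ioi (0:ℝ) ∩ Set.Ioc (1:ℝ) R = Set.Ioc (1:ℝ) R :=
          Set.inter_eq_self_of_subset_right (fun x hx => lt_trans zero_lt_one hx.1)
        rw [setIntegral_indicator measurableSet_Ioc, hcirc, hinter]

lemma symAsym_cont_cutoff_smul (g : ℝ × ℝ → E) (χ : ℝ × ℝ → ℝ) (hχ : Continuous χ)
    (hχ0 : ∃ ε > (0:ℝ), ∀ p : ℝ × ℝ, Real.sqrt (p.1 ^ 2 + p.2 ^ 2) < ε → χ p = 0)
    (hg : ContinuousOn g {p : ℝ × ℝ | p ≠ 0}) :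
    Continuous fun p => χ p • g p := by
  rw [continuous_iff_continuousAt]
  intro p
  by_cases hp : p = 0
  · subst hp
    obtain ⟨ε, hε, h0⟩ := hχ0
    have hU : {q : ℝ × ℝ | Real.sqrt (q.1 ^ 2 + q.2 ^ 2) < ε} ∈ nhds (0 : ℝ × ℝ) := by
      apply (isOpen_lt symAsym_nrm_cont continuous_const).mem_nhds
      show Real.sqrt ((0:ℝ) ^ 2 + (0:ℝ) ^ 2) < ε
      simpa using hε
    have hEq : (fun q : ℝ × ℝ => χ q • g q) =ᶠ[nhds (0 : ℝ × ℝ)] fun _ => (0:E) :=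
      eventually_of_mem hU fun q hq => by
        show χ q • g q = 0
        rw [h0 q hq, zero_smul]
    exact ContinuousAt.congr continuousAt_const hEq.symm
  · have hne : {q : ℝ × ℝ | q ≠ 0} ∈ nhds p := by
      apply isOpen_compl_singleton.mem_nhds
      simpa using hp
    exact hχ.continuousAt.smul ((hg p hp).continuousAt hne)

lemma symAsym_compact_ball (R : ℝ) :
    IsCompact {p : ℝ × ℝ | Real.sqrt (p.1 ^ 2 + p.2 ^ 2) ≤ R} := by
  apply IsCompact.of_isClosed_subset (isCompact_closedBall (0 : ℝ × ℝ) R)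
    (isClosed_le symAsym_nrm_cont continuous_const)
  intro p hp
  simp only [Metric.mem_closedBall, dist_zero_right]
  have h1 : |p.1| ≤ Real.sqrt (p.1 ^ 2 + p.2 ^ 2) := by
    rw [← Real.sqrt_sq_eq_abs]
    exact Real.sqrt_le_sqrt (by nlinarith [sq_nonneg p.2])
  have h2 : |p.2| ≤ Real.sqrt (p.1 ^ 2 + p.2 ^ 2) := by
    rw [← Real.sqrt_sq_eq_abs]
    exact Real.sqrt_le_sqrt (by nlinarith [sq_nonneg p.1])
  rw [Prod.norm_def]
  exact max_le (le_trans (by simpa [Real.norm_eq_abs] using h1) hp)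
    (le_trans (by simpa [Real.norm_eq_abs] using h2) hp)

end Aux


/-- Asymptotic expansion of `∫_{B(R)} σ` for a classical symbol
`σ = Σ_{j≤N} χ σ_{α-j} + σ^N`: as `R → ∞`,
`∫_{B(R)} σ = Σ_{α-j+2≠0} (α-j+2)⁻¹ R^{α-j+2} ∫_{S¹}σ_{α-j} + (log R)·β + c + o(1)`,
where `β = ∫_{S¹} σ_{-2}` (zero if `-2` does not occur among the orders `α - j`, `j ≤ N`). -/
theorem symbol_ball_integral_asymptotic_expansion {E : Type*} [NormedAddCommGroup E]
    [NormedSpace ℝ E] [CompleteSpace E]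
    (α : ℝ) (N : ℕ) (hN : α + 1 < N)
    (σ σN : ℝ × ℝ → E) (σhom : ℕ → ℝ × ℝ → E) (χ : ℝ × ℝ → ℝ)
    (hχsmooth : ContDiff ℝ (⊤ : ℕ∞) χ)
    (hχ0 : ∃ ε > (0:ℝ), ∀ p : ℝ × ℝ, Real.sqrt (p.1 ^ 2 + p.2 ^ 2) < ε → χ p = 0)
    (hχ1 : ∀ p : ℝ × ℝ, 1 ≤ Real.sqrt (p.1 ^ 2 + p.2 ^ 2) → χ p = 1)
    (hχrange : ∀ p, 0 ≤ χ p ∧ χ p ≤ 1)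
    (hcont : ∀ j ≤ N, ContinuousOn (σhom j) {p : ℝ × ℝ | p ≠ 0})
    (hhom : ∀ j ≤ N, ∀ c : ℝ, 0 < c → ∀ p : ℝ × ℝ, p ≠ 0 →
      σhom j (c • p) = c ^ (α - j) • σhom j p)
    (hσN : Integrable σN)
    (hdecomp : ∀ ξ : ℝ × ℝ,
      σ ξ = (∑ j ∈ Finset.range (N + 1), χ ξ • σhom j ξ) + σN ξ) :
    ∃ c : E, Tendsto
      (fun R : ℝ =>
        (∫ p in {p : ℝ × ℝ | Real.sqrt (p.1 ^ 2 + p.2 ^ 2) ≤ R}, σ p)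
        - (∑ j ∈ Finset.range (N + 1),
            if α - j + 2 ≠ 0 then
              ((α - j + 2)⁻¹ * R ^ (α - j + 2)) •
                ∫ θ in (0:ℝ)..(2 * π), σhom j (Real.cos θ, Real.sin θ)
            else 0)
        - (Real.log R) • (∑ j ∈ Finset.range (N + 1),
            if α - (j : ℝ) = -2 then
              ∫ θ in (0:ℝ)..(2 * π), σhom j (Real.cos θ, Real.sin θ)
            else 0)
        - c)
      atTop (nhds 0) := by
  classical
  set S : ℝ → Set (ℝ × ℝ) := fun R => {p : ℝ × ℝ | Real.sqrt (p.1 ^ 2 + p.2 ^ 2) ≤ R}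
    with hSdef
  set A : ℕ → E := fun j => ∫ θ in (0:ℝ)..(2 * π), σhom j (Real.cos θ, Real.sin θ) with hAdef
  have hSmeas : ∀ R : ℝ, MeasurableSet (S R) := fun R =>
    measurableSet_le symAsym_nrm_cont.measurable measurable_const
  have hfc : ∀ j ≤ N, Continuous fun p => χ p • σhom j p := fun j hj =>
    symAsym_cont_cutoff_smul _ _ hχsmooth.continuous hχ0 (hcont j hj)
  have hfint : ∀ j ≤ N, ∀ R : ℝ, IntegrableOn (fun p => χ p • σhom j p) (S R) := fun j hj R =>
    ((hfc j hj).continuousOn).integrableOn_compact (symAsym_compact_ball R)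
  -- per-j splitting for R ≥ 1
  have key : ∀ R : ℝ, 1 ≤ R → ∀ j ∈ Finset.range (N + 1),
      ∫ p in S R, χ p • σhom j p
        = (∫ p in S 1, χ p • σhom j p)
          + (∫ r in Set.Ioc (1:ℝ) R, r ^ (α - j + 1)) • A j := by
    intro R hR j hj
    have hjN : j ≤ N := Finset.mem_range_succ_iff.mp hj
    have hsplit : S R = S 1 ∪ {p : ℝ × ℝ | 1 < Real.sqrt (p.1 ^ 2 + p.2 ^ 2)
        ∧ Real.sqrt (p.1 ^ 2 + p.2 ^ 2) ≤ R} := by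
      ext p
      simp only [hSdef, Set.mem_setOf_eq, Set.mem_union]
      constructor
      · intro h
        by_cases h1 : Real.sqrt (p.1 ^ 2 + p.2 ^ 2) ≤ 1
        · exact Or.inl h1
        · exact Or.inr ⟨lt_of_not_ge h1, h⟩
      · rintro (h | h)
        · exact le_trans h hR
        · exact h.2
    have hdisj : Disjoint (S 1) {p : ℝ × ℝ | 1 < Real.sqrt (p.1 ^ 2 + p.2 ^ 2)
        ∧ Real.sqrt (p.1 ^ 2 + p.2 ^ 2) ≤ R} := by
      rw [Set.disjoint_left]
      intro p hp hp'
      exact absurd hp' (by simp only [Set.mem_setOf_eq]; intro h; exact absurd hp (not_le.mpr h.1))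
    rw [hsplit, setIntegral_union hdisj (symAsym_measurable_ann R) (hfint j hjN 1)
      ((hfint j hjN R).mono_set (by rw [hsplit]; exact Set.subset_union_right))]
    congr 1
    have hann : ∫ p in {p : ℝ × ℝ | 1 < Real.sqrt (p.1 ^ 2 + p.2 ^ 2)
        ∧ Real.sqrt (p.1 ^ 2 + p.2 ^ 2) ≤ R}, χ p • σhom j p
        = ∫ p in {p : ℝ × ℝ | 1 < Real.sqrt (p.1 ^ 2 + p.2 ^ 2)
        ∧ Real.sqrt (p.1 ^ 2 + p.2 ^ 2) ≤ R}, σhom j p := by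
      apply setIntegral_congr_fun (symAsym_measurable_ann R)
      intro p hp
      show χ p • σhom j p = σhom j p
      rw [hχ1 p (le_of_lt hp.1), one_smul]
    rw [hann, symAsym_annulus_polar (σhom j) (α - j) (hhom j hjN) R]
  -- radial integrals
  have hrad_ne : ∀ R : ℝ, 1 ≤ R → ∀ j : ℕ, α - j + 2 ≠ 0 →
      ∫ r in Set.Ioc (1:ℝ) R, r ^ (α - j + 1)
        = (α - j + 2)⁻¹ * R ^ (α - j + 2) - (α - j + 2)⁻¹ := by
    intro R hR j hne
    rw [← intervalIntegral.integral_of_le hR,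
      integral_rpow (Or.inr ⟨fun h => hne (by linarith), by
        rw [Set.uIcc_of_le hR]; rintro ⟨h0, -⟩; linarith⟩)]
    rw [Real.one_rpow, show α - j + 1 + 1 = α - j + 2 by ring]
    field_simp
  have hrad_eq : ∀ R : ℝ, 1 ≤ R → ∀ j : ℕ, α - j + 2 = 0 →
      ∫ r in Set.Ioc (1:ℝ) R, r ^ (α - j + 1) = Real.log R := by
    intro R hR j he
    rw [← intervalIntegral.integral_of_le hR]
    have h1 : ∀ x : ℝ, x ^ (α - j + 1) = x⁻¹ := fun x => by
      rw [show α - j + 1 = -1 by linarith, Real.rpow_neg_one]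
    simp_rw [h1]
    rw [integral_inv (by rw [Set.uIcc_of_le hR]; rintro ⟨h0, -⟩; linarith), div_one]
  -- convergence of the remainder integral
  have hσNlim : Tendsto (fun R : ℝ => ∫ p in S R, σN p) atTop (nhds (∫ p, σN p)) := by
    have heq : ∀ R : ℝ, ∫ p in S R, σN p = ∫ p, (S R).indicator σN p := fun R =>
      (integral_indicator (hSmeas R)).symm
    simp_rw [heq]
    apply tendsto_integral_filter_of_dominated_convergence (fun p => ‖σN p‖)
    · exact Eventually.of_forall fun R => hσN.aestronglyMeasurable.indicator (hSmeas R)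
    · exact Eventually.of_forall fun R =>
        Eventually.of_forall fun p => norm_indicator_le_norm_self σN p
    · exact hσN.norm
    · refine Eventually.of_forall fun p => ?_
      apply Tendsto.congr' _ (tendsto_const_nhds (x := σN p))
      filter_upwards [eventually_ge_atTop (Real.sqrt (p.1 ^ 2 + p.2 ^ 2))] with R hR
      exact (Set.indicator_of_mem (show p ∈ S R from hR) σN).symm
  -- choose the constant
  refine ⟨(∑ j ∈ Finset.range (N + 1), ∫ p in S 1, χ p • σhom j p)
    - (∑ j ∈ Finset.range (N + 1), if α - j + 2 ≠ 0 then (α - j + 2)⁻¹ • A j else 0)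
    + ∫ p, σN p, ?_⟩
  have hlim : Tendsto (fun R : ℝ => (∫ p in S R, σN p) - ∫ p, σN p) atTop (nhds 0) := by
    simpa using hσNlim.sub_const (∫ p, σN p)
  apply Tendsto.congr' _ hlim
  filter_upwards [eventually_ge_atTop (1:ℝ)] with R hR
  -- decompose the integral of σ
  have hσR : ∫ p in S R, σ p
      = (∑ j ∈ Finset.range (N + 1), ∫ p in S 1, χ p • σhom j p)
        + (∑ j ∈ Finset.range (N + 1), (∫ r in Set.Ioc (1:ℝ) R, r ^ (α - j + 1)) • A j)
        + ∫ p in S R, σN p := by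
    have h1 : ∫ p in S R, σ p
        = ∫ p in S R, ((∑ j ∈ Finset.range (N + 1), χ p • σhom j p) + σN p) := by
      apply setIntegral_congr_fun (hSmeas R)
      intro p _
      exact hdecomp p
    rw [h1, integral_add (integrable_finset_sum _ fun j hj =>
        hfint j (Finset.mem_range_succ_iff.mp hj) R) (hσN.integrableOn),
      integral_finset_sum _ (fun j hj => hfint j (Finset.mem_range_succ_iff.mp hj) R)]
    rw [Finset.sum_congr rfl (key R hR), Finset.sum_add_distrib]
  have hsum : ∑ j ∈ Finset.range (N + 1), (∫ r in Set.Ioc (1:ℝ) R, r ^ (α - j + 1)) • A j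
      = (∑ j ∈ Finset.range (N + 1),
            if α - j + 2 ≠ 0 then ((α - j + 2)⁻¹ * R ^ (α - j + 2)) • A j else 0)
        + Real.log R • (∑ j ∈ Finset.range (N + 1), if α - (j : ℝ) = -2 then A j else 0)
        - (∑ j ∈ Finset.range (N + 1), if α - j + 2 ≠ 0 then (α - j + 2)⁻¹ • A j else 0) := by
    rw [Finset.smul_sum, ← Finset.sum_add_distrib, ← Finset.sum_sub_distrib]
    apply Finset.sum_congr rfl
    intro j _
    by_cases hne : α - j + 2 ≠ 0
    · rw [if_pos hne, if_pos hne, if_neg (show ¬(α - (j:ℝ) = -2) from fun h => hne (by linarith)),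
        hrad_ne R hR j hne, smul_zero, add_zero, sub_smul]
    · push_neg at hne
      have h2 : ¬(α - (j:ℝ) + 2 ≠ 0) := not_not_intro hne
      rw [if_pos (show α - (j:ℝ) = -2 by linarith), if_neg h2, if_neg h2,
        hrad_eq R hR j hne]
      simp
  rw [hσR, hsum]
  abel
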